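/- For every integer N₀ ≥ 1 there exists a family {(l_k, m_k) : k ∈ ℤ³, 0 < |k|_∞ ≤ N₀} of pairs of lattice vectors such that: (1) if k ∈ ℤ³_+ then l_k, −m_k ∈ ℤ³_+ with |l_k|_∞ > N₀, |m_k|_∞ > N₀ and l_k + m_k = k; (2) if k ∈ ℤ³_− then l_k, m_k ∈ ℤ³_+ with |l_k|_∞, |m_k|_∞ > N₀ and l_k − m_k = k; (3) |l_k| ≠ |m_k| and l_k, m_k are linearly independent for all k; (4) |l_k|, |m_k| ≥ 2^{(2N₀+1)³} for all k; (5) for distinct k₁ ≠ k₂, all of |l_{k₁} ± l_{k₂}|, |m_{k₁} ± m_{k₂}|, |l_{k₁} ± m_{k₂}|, |m_{k₁} ± l_{k₂}| are at least 2^{(2N₀+1)³}. -/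

import Mathlib

/-- The sup-norm `|k|_∞ = max_i |k_i|` of a lattice vector. -/
def ninf (k : Fin 3 → ℤ) : ℤ := max |k 0| (max |k 1| |k 2|)

/-- `ℤ³₊`: the first nonzero coordinate is positive. -/
def Zplus (k : Fin 3 → ℤ) : Prop :=
  0 < k 0 ∨ (k 0 = 0 ∧ 0 < k 1) ∨ (k 0 = 0 ∧ k 1 = 0 ∧ 0 < k 2)

/-- `ℤ³₋ = −ℤ³₊`. -/
def Zminus (k : Fin 3 → ℤ) : Prop := Zplus (-k)

/-- `a` and `b` are `B`-separated: both `|a + b|` and `|a − b|` are at least `B`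
(in Euclidean norm, stated for the squares). -/
def farApart (a b : Fin 3 → ℤ) (B : ℤ) : Prop :=
  B ^ 2 ≤ (∑ i, (a i + b i) ^ 2) ∧ B ^ 2 ≤ (∑ i, (a i - b i) ^ 2)

/-!
Put `s = (a, N₀² + 1, 0)`, `l_k = k + s` and `m_k = ∓s` (sign according to `k ∈ ℤ³_±`), with
the level `a = a_k = 3B(c(k) + 1)`, where `B = 2^{(2N₀+1)³}` and `c : ℤ³ → ℕ` is any injection.
The first coordinates of `l_k` and `m_k` lie within `N₀` of `a_k`, while distinct levels are at
least `3B > B + 2N₀` apart; this gives (4) and (5). As `B > (2N₀+1)³ ≥ N₀(N₀+1)²`, each nonzero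
term of `|l_k|² - |m_k|² = 2a k₀ + 2(N₀² + 1)k₁ + |k|²` dominates the ones after it, so the
difference is nonzero, and the same domination makes a `2 × 2` minor of `(k, s)` nonzero.
-/

theorem LinearIndependent.pair_of_mul_sub_mul_ne_zero {ι R : Type*} [CommRing R]
    [NoZeroDivisors R] {u v : ι → R} (i j : ι) (h : u i * v j - u j * v i ≠ 0) :
    LinearIndependent R ![u, v] := by
  refine LinearIndependent.pair_iff.2 fun s t hst => ?_
  have hi : s * u i + t * v i = 0 := by simpa using congrFun hst i
  have hj : s * u j + t * v j = 0 := by simpa using congrFun hst j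
  refine ⟨(mul_eq_zero.1 ?_).resolve_right h, (mul_eq_zero.1 ?_).resolve_right h⟩
  · linear_combination v j * hi - v i * hj
  · linear_combination u i * hj - u j * hi

theorem sq_le_sum_sq_of_le_abs {ι R : Type*} [Fintype ι] [Ring R] [LinearOrder R]
    [IsStrictOrderedRing R] {v : ι → R} {B : R} (i : ι) (hB : 0 ≤ B) (h : B ≤ |v i|) :
    B ^ 2 ≤ ∑ j, v j ^ 2 :=
  calc B ^ 2 ≤ |v i| ^ 2 := pow_le_pow_left₀ hB h 2
    _ = v i ^ 2 := sq_abs _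
    _ ≤ ∑ j, v j ^ 2 := Finset.single_le_sum (fun j _ => sq_nonneg (v j)) (Finset.mem_univ i)

theorem mul_add_ne_zero_of_abs_lt {c x r : ℤ} (hx : x ≠ 0) (hr : |r| < c) : c * x + r ≠ 0 := by
  intro h
  have hc : 0 < c := (abs_nonneg r).trans_lt hr
  have : c ≤ |r| := by
    calc c ≤ c * |x| := le_mul_of_one_le_right hc.le (Int.one_le_abs hx)
      _ = |r| := by rw [← abs_of_pos hc, ← abs_mul, eq_neg_of_add_eq_zero_left h, abs_neg]
  exact this.not_gt hr

theorem lt_of_mul_add_one_sq_lt {N B : ℤ} (hN : 0 ≤ N) (h : N * (N + 1) ^ 2 < B) : N < B :=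
  (le_mul_of_one_le_right hN (by nlinarith)).trans_lt h

theorem mul_add_one_sq_lt_two_pow (N : ℕ) :
    (N : ℤ) * (N + 1) ^ 2 < 2 ^ ((2 * N + 1) ^ 3) := by
  have h : N * (N + 1) ^ 2 ≤ (2 * N + 1) ^ 3 :=
    calc N * (N + 1) ^ 2 ≤ (2 * N + 1) * (2 * N + 1) ^ 2 :=
          Nat.mul_le_mul (by omega) (Nat.pow_le_pow_left (by omega) 2)
      _ = (2 * N + 1) ^ 3 := by ring
  exact_mod_cast h.trans_lt Nat.lt_two_pow_self

theorem farApart_of_le_abs_abs_sub_abs {x y : Fin 3 → ℤ} {B : ℤ} (hB : 0 ≤ B)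
    (h : B ≤ |(|x 0| - |y 0|)|) : farApart x y B :=
  ⟨sq_le_sum_sq_of_le_abs (v := fun i => x i + y i) 0 hB
      (h.trans (by simpa using abs_abs_sub_abs_le_abs_sub (x 0) (-y 0))),
    sq_le_sum_sq_of_le_abs (v := fun i => x i - y i) 0 hB
      (h.trans (abs_abs_sub_abs_le_abs_sub _ _))⟩

theorem farApart_of_near_levels {x y : Fin 3 → ℤ} {a₁ a₂ N B : ℤ} (hB : 0 ≤ B)
    (hx : |(|x 0| - a₁)| ≤ N) (hy : |(|y 0| - a₂)| ≤ N) (hgap : B + 2 * N ≤ |a₁ - a₂|) :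
    farApart x y B := by
  refine farApart_of_le_abs_abs_sub_abs hB ?_
  have htri : |a₁ - a₂| ≤ |(|x 0| - a₁)| + |(|x 0| - |y 0|)| + |(|y 0| - a₂)| := by
    calc |a₁ - a₂| = |-(|x 0| - a₁) + (|x 0| - |y 0|) + (|y 0| - a₂)| := by ring_nf
      _ ≤ |-(|x 0| - a₁)| + |(|x 0| - |y 0|)| + |(|y 0| - a₂)| := abs_add_three _ _ _
      _ = _ := by rw [abs_neg]
  linarith

theorem Zplus.not_neg {k : Fin 3 → ℤ} (h : Zplus k) : ¬Zplus (-k) := by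
  simp only [Zplus, Pi.neg_apply] at h ⊢
  omega

theorem ne_zero_of_ninf_pos {k : Fin 3 → ℤ} (h : 0 < ninf k) : k ≠ 0 := by
  rintro rfl
  simp [ninf] at h

theorem abs_le_of_ninf_le {k : Fin 3 → ℤ} {N : ℤ} (h : ninf k ≤ N) (i : Fin 3) : |k i| ≤ N := by
  simp only [ninf, max_le_iff] at h
  fin_cases i
  exacts [h.1, h.2.1, h.2.2]

theorem lt_ninf_of_lt_abs_zero {k : Fin 3 → ℤ} {N : ℤ} (h : N < |k 0|) : N < ninf k :=
  h.trans_le (le_max_left _ _)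

namespace HighFrequencyPair

def shift (N a : ℤ) : Fin 3 → ℤ := ![a, N ^ 2 + 1, 0]

def l (N : ℤ) (a : (Fin 3 → ℤ) → ℤ) (k : Fin 3 → ℤ) : Fin 3 → ℤ := k + shift N (a k)

open Classical in
noncomputable def m (N : ℤ) (a : (Fin 3 → ℤ) → ℤ) (k : Fin 3 → ℤ) : Fin 3 → ℤ :=
  if Zplus k then -shift N (a k) else shift N (a k)

section

variable {N a : ℤ} {k : Fin 3 → ℤ}

theorem sum_sq_add_shift_ne (hk : k ≠ 0) (hkN : ∀ i, |k i| ≤ N) (ha : N * (N + 1) ^ 2 < a) :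
    ∑ i, (k + shift N a) i ^ 2 ≠ ∑ i, shift N a i ^ 2 := by
  have hsq (i : Fin 3) : k i ^ 2 ≤ N ^ 2 := sq_le_sq' (abs_le.1 (hkN i)).1 (abs_le.1 (hkN i)).2
  have hN : 0 ≤ N := (abs_nonneg _).trans (hkN 0)
  rw [← sub_ne_zero]
  have hdiff : ∑ i, (k + shift N a) i ^ 2 - ∑ i, shift N a i ^ 2 =
      2 * a * k 0 + (2 * (N ^ 2 + 1) * k 1 + (k 0 ^ 2 + k 1 ^ 2 + k 2 ^ 2)) := by
    simp [Fin.sum_univ_three, shift]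
    ring
  rw [hdiff]
  intro h
  rcases ne_or_eq (k 0) 0 with h0 | h0
  · refine mul_add_ne_zero_of_abs_lt h0 ?_ h
    have hk1 : |2 * (N ^ 2 + 1) * k 1| ≤ 2 * (N ^ 2 + 1) * N := by
      rw [abs_mul, abs_of_pos (by positivity)]
      exact mul_le_mul_of_nonneg_left (hkN 1) (by positivity)
    calc _ ≤ |2 * (N ^ 2 + 1) * k 1| + |k 0 ^ 2 + k 1 ^ 2 + k 2 ^ 2| := abs_add_le _ _
      _ < 2 * a := by
        rw [abs_of_nonneg (by positivity : (0 : ℤ) ≤ k 0 ^ 2 + k 1 ^ 2 + k 2 ^ 2)]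
        nlinarith [hsq 0, hsq 1, hsq 2]
  rcases ne_or_eq (k 1) 0 with h1 | h1
  · refine mul_add_ne_zero_of_abs_lt (c := 2 * (N ^ 2 + 1)) (r := k 1 ^ 2 + k 2 ^ 2) h1 ?_
      (by linear_combination h - (2 * a + k 0) * h0)
    rw [abs_of_nonneg (by positivity)]
    linarith [hsq 1, hsq 2]
  have h2 : k 2 ≠ 0 := fun h2 => hk (by ext i; fin_cases i <;> assumption)
  exact h2 (pow_eq_zero_iff two_ne_zero |>.1
    (by linear_combination h - (2 * a + k 0) * h0 - (2 * (N ^ 2 + 1) + k 1) * h1))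

theorem linearIndependent_shift (hk : k ≠ 0) (hkN : ∀ i, |k i| ≤ N) (ha : N * (N + 1) ^ 2 < a) :
    LinearIndependent ℤ ![k, shift N a] := by
  have hN : 0 ≤ N := (abs_nonneg _).trans (hkN 0)
  have hNa : N * (N ^ 2 + 1) < a := by nlinarith
  have ha0 : a ≠ 0 := (lt_of_le_of_lt (by positivity) hNa).ne'
  rcases ne_or_eq (k 2) 0 with h2 | h2
  · refine .pair_of_mul_sub_mul_ne_zero 0 2 ?_
    simpa [shift] using ⟨h2, ha0⟩
  refine .pair_of_mul_sub_mul_ne_zero 0 1 ?_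
  simp only [shift, Matrix.cons_val_zero, Matrix.cons_val_one]
  rcases ne_or_eq (k 1) 0 with h1 | h1
  · have hr : |k 0 * (N ^ 2 + 1)| < a := by
      rw [abs_mul, abs_of_pos (by positivity : (0 : ℤ) < N ^ 2 + 1)]
      exact (mul_le_mul_of_nonneg_right (hkN 0) (by positivity)).trans_lt hNa
    convert mul_add_ne_zero_of_abs_lt (neg_ne_zero.2 h1) hr using 1
    ring
  have h0 : k 0 ≠ 0 := fun h0 => hk (by ext i; fin_cases i <;> assumption)
  simpa [h1] using ⟨h0, by positivity⟩

end

section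

variable {N B : ℤ} {a : (Fin 3 → ℤ) → ℤ} {k k₁ k₂ : Fin 3 → ℤ}

theorem l_zero : l N a k 0 = k 0 + a k := by simp [l, shift]

theorem abs_m_zero : |m N a k 0| = |a k| := by
  unfold m
  split_ifs <;> simp [shift]

theorem sum_sq_m : ∑ i, m N a k i ^ 2 = ∑ i, shift N (a k) i ^ 2 := by
  unfold m
  split_ifs <;> simp

theorem properties_of_low_mode (hk : k ≠ 0) (hkN : ∀ i, |k i| ≤ N) (hB : N * (N + 1) ^ 2 < B)
    (ha : B + N ≤ a k) :
    (Zplus k → Zplus (l N a k) ∧ Zplus (-m N a k) ∧ N < ninf (l N a k) ∧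
      N < ninf (m N a k) ∧ l N a k + m N a k = k) ∧
    (Zminus k → Zplus (l N a k) ∧ Zplus (m N a k) ∧ N < ninf (l N a k) ∧
      N < ninf (m N a k) ∧ l N a k - m N a k = k) ∧
    ∑ i, l N a k i ^ 2 ≠ ∑ i, m N a k i ^ 2 ∧
    LinearIndependent ℤ ![l N a k, m N a k] ∧
    B ^ 2 ≤ ∑ i, l N a k i ^ 2 ∧ B ^ 2 ≤ ∑ i, m N a k i ^ 2 := by
  have hk0 := abs_le.1 (hkN 0)
  have hN : 0 ≤ N := (abs_nonneg _).trans (hkN 0)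
  have hNB : N < B := lt_of_mul_add_one_sq_lt hN hB
  have hBl : B ≤ |l N a k 0| := by
    rw [l_zero]
    exact (by linarith : B ≤ k 0 + a k).trans (le_abs_self _)
  have hBm : B ≤ |m N a k 0| := by
    rw [abs_m_zero, abs_of_nonneg (by linarith)]
    linarith
  have hl : Zplus (l N a k) := Or.inl (by rw [l_zero]; linarith)
  have hlN : N < ninf (l N a k) := lt_ninf_of_lt_abs_zero (hNB.trans_le hBl)
  have hmN : N < ninf (m N a k) := lt_ninf_of_lt_abs_zero (hNB.trans_le hBm)
  have hs : Zplus (shift N (a k)) := Or.inl (by simp [shift]; linarith)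
  have ha' : N * (N + 1) ^ 2 < a k := by linarith
  refine ⟨fun hp => ?_, fun hn => ?_, ?_, ?_, ?_, ?_⟩
  · have hm : m N a k = -shift N (a k) := if_pos hp
    refine ⟨hl, by rwa [hm, neg_neg], hlN, hmN, by rw [hm, l, add_neg_cancel_right]⟩
  · have hm : m N a k = shift N (a k) := if_neg fun hp => hp.not_neg hn
    exact ⟨hl, hm ▸ hs, hlN, hmN, by rw [hm, l, add_sub_cancel_right]⟩
  · rw [sum_sq_m]
    exact sum_sq_add_shift_ne hk hkN ha'
  · unfold m l
    split_ifs <;> simpa using linearIndependent_shift hk hkN ha'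
  · exact sq_le_sum_sq_of_le_abs 0 (by linarith) hBl
  · exact sq_le_sum_sq_of_le_abs 0 (by linarith) hBm

theorem abs_abs_l_zero_sub_le (hk0 : |k 0| ≤ N) (ha : N ≤ a k) :
    |(|l N a k 0| - a k)| ≤ N := by
  rw [l_zero, abs_of_nonneg (by linarith [neg_abs_le (k 0)] : 0 ≤ k 0 + a k), add_sub_cancel_right]
  exact hk0

theorem abs_abs_m_zero_sub_le (hN : 0 ≤ N) (ha : 0 ≤ a k) : |(|m N a k 0| - a k)| ≤ N := by
  rwa [abs_m_zero, abs_of_nonneg ha, sub_self, abs_zero]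

theorem farApart_of_gap (hB : 0 ≤ B) (hk₁ : |k₁ 0| ≤ N) (hk₂ : |k₂ 0| ≤ N) (ha₁ : N ≤ a k₁)
    (ha₂ : N ≤ a k₂) (hgap : B + 2 * N ≤ |a k₁ - a k₂|) :
    farApart (l N a k₁) (l N a k₂) B ∧ farApart (m N a k₁) (m N a k₂) B ∧
      farApart (l N a k₁) (m N a k₂) B ∧ farApart (m N a k₁) (l N a k₂) B := by
  have hN : 0 ≤ N := (abs_nonneg _).trans hk₁
  have hl₁ := abs_abs_l_zero_sub_le hk₁ ha₁
  have hl₂ := abs_abs_l_zero_sub_le hk₂ ha₂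
  have hm₁ := abs_abs_m_zero_sub_le hN (hN.trans ha₁)
  have hm₂ := abs_abs_m_zero_sub_le hN (hN.trans ha₂)
  exact ⟨farApart_of_near_levels hB hl₁ hl₂ hgap, farApart_of_near_levels hB hm₁ hm₂ hgap,
    farApart_of_near_levels hB hl₁ hm₂ hgap, farApart_of_near_levels hB hm₁ hl₂ hgap⟩

end

def level (B : ℤ) (c : (Fin 3 → ℤ) → ℕ) (k : Fin 3 → ℤ) : ℤ := 3 * B * (c k + 1)

theorem three_mul_le_level {B : ℤ} (hB : 0 ≤ B) (c : (Fin 3 → ℤ) → ℕ) (k : Fin 3 → ℤ) :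
    3 * B ≤ level B c k :=
  le_mul_of_one_le_right (by positivity) (by simp)

theorem three_mul_le_abs_level_sub {B : ℤ} (hB : 0 ≤ B) {c : (Fin 3 → ℤ) → ℕ}
    (hc : Function.Injective c) {k₁ k₂ : Fin 3 → ℤ} (hne : k₁ ≠ k₂) :
    3 * B ≤ |level B c k₁ - level B c k₂| := by
  have hcode : (c k₁ : ℤ) - c k₂ ≠ 0 := sub_ne_zero.2 (by exact_mod_cast hc.ne hne)
  calc 3 * B ≤ 3 * B * |(c k₁ : ℤ) - c k₂| :=
        le_mul_of_one_le_right (by positivity) (Int.one_le_abs hcode)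
    _ = |level B c k₁ - level B c k₂| := by
        rw [level, level, ← mul_sub, abs_mul, abs_of_nonneg (by positivity : 0 ≤ 3 * B)]
        ring_nf

end HighFrequencyPair

open HighFrequencyPair in
theorem separated_high_frequency_pairs_general (N₀ : ℕ) :
    ∃ L M : (Fin 3 → ℤ) → (Fin 3 → ℤ),
      (∀ k, 0 < ninf k → ninf k ≤ N₀ →
        -- (1) positive low modes
        (Zplus k → Zplus (L k) ∧ Zplus (-(M k)) ∧ (N₀ : ℤ) < ninf (L k) ∧
          (N₀ : ℤ) < ninf (M k) ∧ L k + M k = k) ∧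
        -- (2) negative low modes
        (Zminus k → Zplus (L k) ∧ Zplus (M k) ∧ (N₀ : ℤ) < ninf (L k) ∧
          (N₀ : ℤ) < ninf (M k) ∧ L k - M k = k) ∧
        -- (3) distinct lengths and linear independence
        (∑ i, (L k i) ^ 2) ≠ (∑ i, (M k i) ^ 2) ∧
        LinearIndependent ℤ ![L k, M k] ∧
        -- (4) high frequency lower bound `|l_k|, |m_k| ≥ 2^{(2N₀+1)³}`
        ((2 : ℤ) ^ ((2 * N₀ + 1) ^ 3)) ^ 2 ≤ (∑ i, (L k i) ^ 2) ∧
        ((2 : ℤ) ^ ((2 * N₀ + 1) ^ 3)) ^ 2 ≤ (∑ i, (M k i) ^ 2)) ∧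
      -- (5) separation between the pairs attached to distinct low modes
      (∀ k₁ k₂, 0 < ninf k₁ → ninf k₁ ≤ N₀ → 0 < ninf k₂ → ninf k₂ ≤ N₀ →
        k₁ ≠ k₂ →
          farApart (L k₁) (L k₂) (2 ^ ((2 * N₀ + 1) ^ 3)) ∧
          farApart (M k₁) (M k₂) (2 ^ ((2 * N₀ + 1) ^ 3)) ∧
          farApart (L k₁) (M k₂) (2 ^ ((2 * N₀ + 1) ^ 3)) ∧
          farApart (M k₁) (L k₂) (2 ^ ((2 * N₀ + 1) ^ 3))) := by
  obtain ⟨c, hc⟩ := Countable.exists_injective_nat (Fin 3 → ℤ)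
  have hN : (0 : ℤ) ≤ N₀ := by positivity
  have hNB := lt_of_mul_add_one_sq_lt hN (mul_add_one_sq_lt_two_pow N₀)
  have hB : (0 : ℤ) ≤ 2 ^ ((2 * N₀ + 1) ^ 3) := by positivity
  have hlevel k := three_mul_le_level hB c k
  refine ⟨l N₀ (level (2 ^ ((2 * N₀ + 1) ^ 3)) c), m N₀ (level (2 ^ ((2 * N₀ + 1) ^ 3)) c),
    fun k hk hkN => ?_, fun k₁ k₂ _ hk₁ _ hk₂ hne => ?_⟩
  · exact properties_of_low_mode (ne_zero_of_ninf_pos hk) (abs_le_of_ninf_le hkN)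
      (mul_add_one_sq_lt_two_pow N₀) (by linarith [hlevel k])
  · exact farApart_of_gap hB (abs_le_of_ninf_le hk₁ 0) (abs_le_of_ninf_le hk₂ 0)
      (by linarith [hlevel k₁]) (by linarith [hlevel k₂])
      (by linarith [three_mul_le_abs_level_sub hB hc hne])

/-- Existence of a separated family of high-frequency pairs `(l_k, m_k)`
generating every low mode `k` (`0 < |k|_∞ ≤ N₀`), as used to decouple the
low-mode control equations. -/
theorem separated_high_frequency_pairs (N₀ : ℕ) (hN₀ : 1 ≤ N₀) :
    ∃ L M : (Fin 3 → ℤ) → (Fin 3 → ℤ),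
      (∀ k, 0 < ninf k → ninf k ≤ N₀ →
        -- (1) positive low modes
        (Zplus k → Zplus (L k) ∧ Zplus (-(M k)) ∧ (N₀ : ℤ) < ninf (L k) ∧
          (N₀ : ℤ) < ninf (M k) ∧ L k + M k = k) ∧
        -- (2) negative low modes
        (Zminus k → Zplus (L k) ∧ Zplus (M k) ∧ (N₀ : ℤ) < ninf (L k) ∧
          (N₀ : ℤ) < ninf (M k) ∧ L k - M k = k) ∧
        -- (3) distinct lengths and linear independence
        (∑ i, (L k i) ^ 2) ≠ (∑ i, (M k i) ^ 2) ∧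
        LinearIndependent ℤ ![L k, M k] ∧
        -- (4) high frequency lower bound `|l_k|, |m_k| ≥ 2^{(2N₀+1)³}`
        ((2 : ℤ) ^ ((2 * N₀ + 1) ^ 3)) ^ 2 ≤ (∑ i, (L k i) ^ 2) ∧
        ((2 : ℤ) ^ ((2 * N₀ + 1) ^ 3)) ^ 2 ≤ (∑ i, (M k i) ^ 2)) ∧
      -- (5) separation between the pairs attached to distinct low modes
      (∀ k₁ k₂, 0 < ninf k₁ → ninf k₁ ≤ N₀ → 0 < ninf k₂ → ninf k₂ ≤ N₀ →
        k₁ ≠ k₂ →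
          farApart (L k₁) (L k₂) (2 ^ ((2 * N₀ + 1) ^ 3)) ∧
          farApart (M k₁) (M k₂) (2 ^ ((2 * N₀ + 1) ^ 3)) ∧
          farApart (L k₁) (M k₂) (2 ^ ((2 * N₀ + 1) ^ 3)) ∧
          farApart (M k₁) (L k₂) (2 ^ ((2 * N₀ + 1) ^ 3))) :=
  separated_high_frequency_pairs_general N₀
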